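/- arXiv:math/0005264 — 2 statements merged into one kernel-verified Lean document; each statement's English description precedes it below -/
import Mathlib

section
/- The image of the momentum map F = (H₁, H₂) for the 1:2 resonance equals the set {(X,Y) ∈ ℝ² : 16X³ ≥ 27Y²}; that is, for every (x₁,x₂,ξ₁,ξ₂) ∈ ℝ⁴ one has 16·H₁³ ≥ 27·H₂², and conversely every pair (X,Y) with 16X³ ≥ 27Y² is attained. -/
open Complex

/-- H₁ = ½|z₁|² + |z₂|². -/
noncomputable def H1c : ℂ × ℂ → ℝ := fun z =>
  Complex.normSq z.1 / 2 + Complex.normSq z.2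

/-- H₂ = Re(z₁² z̄₂). -/
noncomputable def H2c : ℂ × ℂ → ℝ := fun z =>
  (z.1 ^ 2 * (starRingEnd ℂ) z.2).re

/-- The image of the momentum map F = (H₁,H₂) of the 1:2 resonance is
exactly {(X,Y) : 16X³ ≥ 27Y²}. -/
theorem stmt2 :
    (∀ z : ℂ × ℂ, 27 * (H2c z) ^ 2 ≤ 16 * (H1c z) ^ 3) ∧
    (∀ X Y : ℝ, 27 * Y ^ 2 ≤ 16 * X ^ 3 → ∃ z : ℂ × ℂ, H1c z = X ∧ H2c z = Y) := by
  constructor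
  · intro z
    set A := Complex.normSq z.1 with hA
    set B := Complex.normSq z.2 with hB
    have hA0 : 0 ≤ A := Complex.normSq_nonneg _
    have hB0 : 0 ≤ B := Complex.normSq_nonneg _
    have h1 : (H2c z) ^ 2 ≤ A ^ 2 * B := by
      have h2 : (H2c z) ^ 2 ≤ Complex.normSq (z.1 ^ 2 * (starRingEnd ℂ) z.2) := by
        have := sq_nonneg (z.1 ^ 2 * (starRingEnd ℂ) z.2).im
        rw [Complex.normSq_apply]
        simp only [H2c]
        nlinarith
      have h3 : Complex.normSq (z.1 ^ 2 * (starRingEnd ℂ) z.2) = A ^ 2 * B := by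
        rw [Complex.normSq_mul, map_pow, Complex.normSq_conj]
      linarith [h2, h3 ▸ h2]
    have hH1 : H1c z = A / 2 + B := rfl
    rw [hH1]
    nlinarith [mul_nonneg (sq_nonneg (A - 4 * B)) (by linarith : (0:ℝ) ≤ 2 * A + B), h1]
  · intro X Y hXY
    have hX0 : 0 ≤ X := by
      by_contra h
      push_neg at h
      have h2 : (0:ℝ) < -X * -X := mul_pos (neg_pos.mpr h) (neg_pos.mpr h)
      nlinarith [sq_nonneg Y]
    set c := Real.sqrt (X / 3) with hc
    have hc2 : c ^ 2 = X / 3 := Real.sq_sqrt (by linarith)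
    have hc0 : 0 ≤ c := Real.sqrt_nonneg _
    set f : ℝ → ℝ := fun t => 2 * t * X - 2 * t ^ 3 with hf
    have hfc : f c = (4 / 3) * c * X := by
      simp only [hf]
      nlinarith [hc2]
    have hfc2 : (f c) ^ 2 = 16 * X ^ 3 / 27 := by
      rw [hfc]
      have h1 : (4 / 3 * c * X) ^ 2 = 16 / 9 * c ^ 2 * X ^ 2 := by ring
      rw [h1, hc2]; ring
    have hfcnn : 0 ≤ f c := by rw [hfc]; exact mul_nonneg (mul_nonneg (by norm_num) hc0) hX0
    have habs : |Y| ≤ f c := by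
      have hY2 : Y ^ 2 ≤ (f c) ^ 2 := by rw [hfc2]; linarith
      calc |Y| = Real.sqrt (Y ^ 2) := (Real.sqrt_sq_eq_abs Y).symm
        _ ≤ Real.sqrt ((f c) ^ 2) := Real.sqrt_le_sqrt hY2
        _ = |f c| := Real.sqrt_sq_eq_abs _
        _ = f c := abs_of_nonneg hfcnn
    have hYle : Y ≤ f c := le_trans (le_abs_self Y) habs
    have hYge : f (-c) ≤ Y := by
      have h1 : f (-c) = - f c := by simp only [hf]; ring
      have h2 := neg_abs_le Y
      rw [h1]; linarith
    have hcont : ContinuousOn f (Set.Icc (-c) c) := by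
      apply Continuous.continuousOn; continuity
    obtain ⟨t, ht, hft⟩ := intermediate_value_Icc (by linarith : -c ≤ c) hcont
      (Set.mem_Icc.mpr ⟨hYge, hYle⟩)
    have ht2 : t ^ 2 ≤ X / 3 := by
      rw [← hc2]
      rcases ht with ⟨h1, h2⟩
      nlinarith
    set a := 2 * (X - t ^ 2) with ha
    have ha0 : 0 ≤ a := by nlinarith
    refine ⟨(((Real.sqrt a : ℝ) : ℂ), (t : ℂ)), ?_, ?_⟩
    · simp only [H1c, Complex.normSq_ofReal]
      rw [Real.mul_self_sqrt ha0, ha]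
      ring
    · simp only [H2c]
      have : ((Real.sqrt a : ℝ) : ℂ) ^ 2 * (starRingEnd ℂ) (t : ℂ)
          = ((Real.sqrt a ^ 2 * t : ℝ) : ℂ) := by
        push_cast [Complex.conj_ofReal]; ring
      rw [this, Complex.ofReal_re, Real.sq_sqrt ha0, ha]
      rw [show f t = 2 * t * X - 2 * t ^ 3 from rfl] at hft
      linear_combination hft
end

section
/- The map Φ(θ,φ) = (√2·e^{iθ} sin φ, −i·e^{2iθ} cos φ) from ℝ² to ℂ² ≅ ℝ⁴ has image exactly equal to the level set {H₁ = 1, H₂ = 0}, where H₁ = ½|z₁|² + |z₂|² and H₂ = Re(z₁² z̄₂). -/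
open Complex

/-- Φ(θ,φ) = (√2 e^{iθ} sin φ, −i e^{2iθ} cos φ). -/
noncomputable def PhiK : ℝ → ℝ → ℂ × ℂ := fun θ φ =>
  ((Real.sqrt 2 : ℂ) * Complex.exp (θ * Complex.I) * (Real.sin φ : ℂ),
   -Complex.I * Complex.exp (2 * θ * Complex.I) * (Real.cos φ : ℂ))

section Aux

private lemma normSq_exp_re_zero (z : ℂ) (h : z.re = 0) :
    Complex.normSq (Complex.exp z) = 1 := by
  rw [Complex.normSq_eq_norm_sq, Complex.norm_exp, h]; simp

private lemma conj_exp_two (θ : ℝ) :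
    (starRingEnd ℂ) (Complex.exp (2 * (θ:ℂ) * Complex.I)) = Complex.exp (-(2 * θ * Complex.I)) := by
  rw [← Complex.exp_conj]
  congr 1
  apply Complex.ext <;> simp

private lemma fwd_H1 (θ φ : ℝ) :
    Complex.normSq ((Real.sqrt 2 : ℂ) * Complex.exp (θ * Complex.I) * (Real.sin φ : ℂ)) / 2 +
    Complex.normSq (-Complex.I * Complex.exp (2 * θ * Complex.I) * (Real.cos φ : ℂ)) = 1 := by
  have e1 : Complex.normSq (Complex.exp ((θ:ℂ) * Complex.I)) = 1 :=
    normSq_exp_re_zero _ (by simp)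
  have e2 : Complex.normSq (Complex.exp (2 * (θ:ℂ) * Complex.I)) = 1 :=
    normSq_exp_re_zero _ (by simp)
  simp only [Complex.normSq_mul, Complex.normSq_ofReal, Complex.normSq_neg, Complex.normSq_I,
    e1, e2]
  have : Real.sqrt 2 ^ 2 = 2 := Real.sq_sqrt (by norm_num)
  nlinarith [Real.sin_sq_add_cos_sq φ]

private lemma fwd_H2 (θ φ : ℝ) :
    (((Real.sqrt 2 : ℂ) * Complex.exp (θ * Complex.I) * (Real.sin φ : ℂ)) ^ 2 *
      (starRingEnd ℂ) (-Complex.I * Complex.exp (2 * θ * Complex.I) * (Real.cos φ : ℂ))).re = 0 := by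
  have hexp : Complex.exp ((θ:ℂ) * Complex.I) ^ 2 * Complex.exp (-(2 * θ * Complex.I)) = 1 := by
    rw [← Complex.exp_nat_mul, ← Complex.exp_add]
    have : ((2:ℕ):ℂ) * ((θ:ℂ) * Complex.I) + -(2 * θ * Complex.I) = 0 := by push_cast; ring
    rw [this, Complex.exp_zero]
  have h2 : ((Real.sqrt 2 : ℂ)) ^ 2 = 2 := by
    rw [← Complex.ofReal_pow, Real.sq_sqrt (by norm_num : (0:ℝ) ≤ 2)]; norm_num
  have key : ((Real.sqrt 2 : ℂ) * Complex.exp (θ * Complex.I) * (Real.sin φ : ℂ)) ^ 2 *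
      (starRingEnd ℂ) (-Complex.I * Complex.exp (2 * θ * Complex.I) * (Real.cos φ : ℂ)) =
      2 * ((Real.sin φ : ℂ)) ^ 2 * (Real.cos φ : ℂ) * Complex.I := by
    simp only [map_mul, map_neg, Complex.conj_I, Complex.conj_ofReal, conj_exp_two, neg_neg]
    calc (↑(Real.sqrt 2) * Complex.exp (↑θ * Complex.I) * ↑(Real.sin φ)) ^ 2 *
          (Complex.I * Complex.exp (-(2 * ↑θ * Complex.I)) * ↑(Real.cos φ))
        = (↑(Real.sqrt 2):ℂ)^2 * ((Real.sin φ:ℂ))^2 * (Real.cos φ:ℂ) *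
          (Complex.exp ((θ:ℂ) * Complex.I) ^ 2 * Complex.exp (-(2 * θ * Complex.I))) * Complex.I := by
          ring
      _ = 2 * ((Real.sin φ:ℂ))^2 * (Real.cos φ:ℂ) * Complex.I := by rw [hexp, h2]; ring
  rw [key]
  simp [Complex.mul_im, Complex.sin_ofReal_im, Complex.cos_ofReal_im]
  left
  rw [← Complex.ofReal_sin, ← Complex.ofReal_pow, Complex.ofReal_im]

private lemma bwd_ne (z₁ z₂ : ℂ) (hz : z₁ ≠ 0)
    (h1 : Complex.normSq z₁ / 2 + Complex.normSq z₂ = 1)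
    (h2 : (z₁ ^ 2 * (starRingEnd ℂ) z₂).re = 0) :
    ∃ θ φ : ℝ,
      (Real.sqrt 2 : ℂ) * Complex.exp (θ * Complex.I) * (Real.sin φ : ℂ) = z₁ ∧
      -Complex.I * Complex.exp (2 * θ * Complex.I) * (Real.cos φ : ℂ) = z₂ := by
  set α := Complex.arg z₁ with hα
  set E := Complex.exp ((α:ℂ) * Complex.I) with hEdef
  have hz1 : (‖z₁‖ : ℂ) * E = z₁ := Complex.norm_mul_exp_arg_mul_I z₁
  have hE2 : Complex.normSq E = 1 := by
    rw [Complex.normSq_eq_norm_sq, Complex.norm_exp]; simp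
  have hE1 : E * (starRingEnd ℂ) E = 1 := by
    rw [Complex.mul_conj, hE2]; norm_num
  set w : ℂ := ((starRingEnd ℂ) E) ^ 2 * z₂ with hwdef
  have hprod : z₁ ^ 2 * (starRingEnd ℂ) z₂ =
      ((‖z₁‖ : ℂ)) ^ 2 * (starRingEnd ℂ) w := by
    conv_lhs => rw [← hz1]
    rw [hwdef, map_mul, map_pow, Complex.conj_conj]; ring
  have hwre : w.re = 0 := by
    rw [hprod] at h2
    have hcast : ((‖z₁‖ : ℂ)) ^ 2 = ((‖z₁‖ ^ 2 : ℝ) : ℂ) := by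
      push_cast; ring
    rw [hcast, Complex.re_ofReal_mul, Complex.conj_re] at h2
    have habs : ‖z₁‖ ≠ 0 := by simpa using hz
    rcases mul_eq_zero.mp h2 with h | h
    · exact absurd (pow_eq_zero_iff (by norm_num) |>.mp h) habs
    · exact h
  set x : ℝ := (Complex.I * w).re with hxdef
  have hu : Complex.I * w = (x : ℂ) := by
    apply Complex.ext
    · simp [hxdef]
    · simp [Complex.mul_im, hwre]
  have hconjE2 : Complex.normSq ((starRingEnd ℂ) E ^ 2) = 1 := by
    rw [sq, Complex.normSq_mul, Complex.normSq_conj, hE2]; ring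
  have hx2 : x ^ 2 = Complex.normSq z₂ := by
    have hns : Complex.normSq (Complex.I * w) = Complex.normSq z₂ := by
      rw [hwdef, Complex.normSq_mul, Complex.normSq_mul, Complex.normSq_I, hconjE2]; ring
    rw [hu, Complex.normSq_ofReal] at hns
    rw [← hns]; ring
  have hx1 : x ^ 2 ≤ 1 := by
    rw [hx2]; nlinarith [Complex.normSq_nonneg z₁]
  have hxm : -1 ≤ x ∧ x ≤ 1 := abs_le.mp (by nlinarith [abs_nonneg x, _root_.sq_abs x])
  refine ⟨α, Real.arccos x, ?_, ?_⟩
  · rw [Real.sin_arccos]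
    have key : Real.sqrt 2 * Real.sqrt (1 - x ^ 2) = ‖z₁‖ := by
      rw [← Real.sqrt_mul (by norm_num)]
      have h21 : 2 * (1 - x ^ 2) = Complex.normSq z₁ := by rw [hx2]; linarith
      rw [h21, ← Complex.sq_norm, Real.sqrt_sq (norm_nonneg z₁)]
    calc (Real.sqrt 2 : ℂ) * Complex.exp (↑α * Complex.I) * ↑(Real.sqrt (1 - x ^ 2))
        = ((Real.sqrt 2 * Real.sqrt (1 - x ^ 2) : ℝ) : ℂ) * E := by push_cast; rw [hEdef]; ring
      _ = z₁ := by rw [key, hz1]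
  · rw [Real.cos_arccos hxm.1 hxm.2]
    have hexp2 : Complex.exp (2 * (α:ℂ) * Complex.I) = E ^ 2 := by
      rw [hEdef, ← Complex.exp_nat_mul]
      congr 1; push_cast; ring
    rw [hexp2, ← hu, hwdef]
    have expand : -Complex.I * E ^ 2 * (Complex.I * (((starRingEnd ℂ) E) ^ 2 * z₂)) =
        -(Complex.I * Complex.I) * (E * (starRingEnd ℂ) E) ^ 2 * z₂ := by ring
    rw [expand, Complex.I_mul_I, hE1]
    ring

private lemma bwd_zero (z₂ : ℂ) (h1 : Complex.normSq (0:ℂ) / 2 + Complex.normSq z₂ = 1) :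
    ∃ θ φ : ℝ,
      (Real.sqrt 2 : ℂ) * Complex.exp (θ * Complex.I) * (Real.sin φ : ℂ) = 0 ∧
      -Complex.I * Complex.exp (2 * θ * Complex.I) * (Real.cos φ : ℂ) = z₂ := by
  have hn : Complex.normSq z₂ = 1 := by simpa using h1
  have habs : ‖Complex.I * z₂‖ = 1 := by
    rw [norm_mul]
    simp [Complex.norm_def, hn]
  refine ⟨Complex.arg (Complex.I * z₂) / 2, 0, by simp, ?_⟩
  have harg : Complex.exp ((Complex.arg (Complex.I * z₂) : ℂ) * Complex.I) = Complex.I * z₂ := by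
    have := Complex.norm_mul_exp_arg_mul_I (Complex.I * z₂)
    rwa [habs, Complex.ofReal_one, one_mul] at this
  have h2θ : (2 : ℂ) * ((Complex.arg (Complex.I * z₂) / 2 : ℝ) : ℂ) * Complex.I
      = (Complex.arg (Complex.I * z₂) : ℂ) * Complex.I := by push_cast; ring
  rw [Real.cos_zero, Complex.ofReal_one, mul_one, h2θ, harg]
  calc -Complex.I * (Complex.I * z₂) = -(Complex.I * Complex.I) * z₂ := by ring
    _ = z₂ := by rw [Complex.I_mul_I]; ring

end Aux

/-- The image of Φ is exactly the singular level set {H₁ = 1, H₂ = 0}. -/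
theorem stmt3 :
    Set.range (fun p : ℝ × ℝ => PhiK p.1 p.2) =
      {z : ℂ × ℂ | H1c z = 1 ∧ H2c z = 0} := by
  ext z
  obtain ⟨z₁, z₂⟩ := z
  simp only [Set.mem_range, Set.mem_setOf_eq]
  constructor
  · rintro ⟨⟨θ, φ⟩, h⟩
    rw [← h]
    exact ⟨fwd_H1 θ φ, fwd_H2 θ φ⟩
  · rintro ⟨h1, h2⟩
    simp only [H1c, H2c] at h1 h2
    by_cases hz : z₁ = 0
    · subst hz
      obtain ⟨θ, φ, e1, e2⟩ := bwd_zero z₂ h1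
      exact ⟨(θ, φ), Prod.ext e1 e2⟩
    · obtain ⟨θ, φ, e1, e2⟩ := bwd_ne z₁ z₂ hz h1 h2
      exact ⟨(θ, φ), Prod.ext e1 e2⟩
end
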